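/- arXiv:2302.12768 — 3 statements merged into one kernel-verified Lean document; each statement's English description precedes it below -/
import Mathlib

section
/- Wallis' axiom fails in L×L: let ε be a positive infinitesimal hyperreal. There exist no points D = (d₁, d₂), E = (e₁, e₂), F = (f₁, f₂) in ℝ*×ℝ* with all six coordinates non-infinite such that (d₁−e₁)² + (d₂−e₂)² = 1, (d₁−f₁)² + (d₂−f₂)² = ε⁻², and (e₁−f₁)² + (e₂−f₂)² = (1+ε²)/ε²; that is, no triangle in L×L is similar, with similarity ratio 1/ε, to the triangle with vertices (0,0), (ε,0), (0,1) with the side of length ε corresponding to a side of length 1. -/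
/-- Wallis' axiom fails in `L × L`: no triangle with limited coordinates has
side lengths `1`, `ε⁻¹`, `√((1+ε²)/ε²)`, i.e. is similar with ratio `1/ε` to
the triangle with vertices `(0,0)`, `(ε,0)`, `(0,1)`. -/
theorem wallis_axiom_fails (ε : ℝ*) (hε : 0 < ε) (hinf : ε.Infinitesimal) :
    ¬ ∃ d₁ d₂ e₁ e₂ f₁ f₂ : ℝ*,
      ¬ d₁.Infinite ∧ ¬ d₂.Infinite ∧ ¬ e₁.Infinite ∧ ¬ e₂.Infinite ∧
      ¬ f₁.Infinite ∧ ¬ f₂.Infinite ∧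
      (d₁ - e₁) ^ 2 + (d₂ - e₂) ^ 2 = 1 ∧
      (d₁ - f₁) ^ 2 + (d₂ - f₂) ^ 2 = (ε⁻¹) ^ 2 ∧
      (e₁ - f₁) ^ 2 + (e₂ - f₂) ^ 2 = (1 + ε ^ 2) / ε ^ 2 := by
  rintro ⟨d₁, d₂, e₁, e₂, f₁, f₂, hd₁, hd₂, _, _, hf₁, hf₂, _, h2, _⟩
  have key : Hyperreal.Infinite ((ε⁻¹) ^ 2) := by
    apply Hyperreal.infinite_of_infinitesimal_inv
    · positivity
    · have : ((ε⁻¹) ^ 2)⁻¹ = ε * ε := by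
        rw [← inv_pow, inv_inv, sq]
      rw [this]
      exact hinf.mul hinf
  have lim : ¬ Hyperreal.Infinite ((d₁ - f₁) ^ 2 + (d₂ - f₂) ^ 2) := by
    have h1 : ¬ Hyperreal.Infinite (d₁ - f₁) := by
      rw [sub_eq_add_neg]
      exact Hyperreal.not_infinite_add hd₁ (Hyperreal.not_infinite_neg hf₁)
    have h2' : ¬ Hyperreal.Infinite (d₂ - f₂) := by
      rw [sub_eq_add_neg]
      exact Hyperreal.not_infinite_add hd₂ (Hyperreal.not_infinite_neg hf₂)
    have := Hyperreal.not_infinite_mul h1 h1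
    have := Hyperreal.not_infinite_mul h2' h2'
    rw [← sq] at *
    exact Hyperreal.not_infinite_add ‹¬ Hyperreal.Infinite ((d₁ - f₁) ^ 2)› ‹_›
  rw [h2] at lim
  exact lim key
end

section
/- Legendre's axiom fails in L×L: let δ be a positive infinitesimal hyperreal, and consider the angle at the origin whose arms are the ray {(t, 0) : t > 0} and the ray {(−t, δ·t) : t > 0}, with the point A = (0, 1) in its interior. If a line y = m·x + 1 through A meets the first arm at a limited point (i.e., there exists t > 0 not infinite with m·t + 1 = 0), then for every s > 0 one has m·(−s) + 1 ≠ δ·s, so the line does not meet the second arm at all. -/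
/-- Legendre's axiom fails in `L × L`: if a line `y = m·x + 1` through
`A = (0,1)` meets the arm `{(t,0) : t > 0}` at a limited point, then it meets
the arm `{(-s, δ·s) : s > 0}` nowhere. -/
theorem legendre_axiom_fails (δ : ℝ*) (hδ : 0 < δ) (hinf : δ.Infinitesimal)
    (m : ℝ*) (hmeet : ∃ t : ℝ*, 0 < t ∧ ¬ t.Infinite ∧ m * t + 1 = 0) :
    ∀ s : ℝ*, 0 < s → m * (-s) + 1 ≠ δ * s := by
  obtain ⟨t, ht, htl, htm⟩ := hmeet
  intro s hs heq
  -- multiply the line equation at the second arm by t and use m * t = -1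
  have key : s + t = δ * s * t := by
    have h1 : (m * (-s) + 1) * t = (δ * s) * t := by rw [heq]
    nlinarith [h1, htm]
  -- t is limited: t < r for some real r > 0
  obtain ⟨r, hr⟩ : ∃ r : ℝ, t < (r : ℝ*) := by
    by_contra h
    push_neg at h
    exact htl (Or.inl fun r => lt_of_le_of_ne (h r) (by
      intro he; exact absurd (he ▸ h (r + 1)) (by push_cast; simp)))
  have hr0 : 0 < r := by
    by_contra h
    push_neg at h
    have : (r : ℝ*) ≤ 0 := by exact_mod_cast h
    exact absurd (ht.trans hr) (not_lt.2 this)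
  have hδr : δ < ((r⁻¹ : ℝ) : ℝ*) :=
    Hyperreal.lt_of_pos_of_infinitesimal hinf r⁻¹ (inv_pos.2 hr0)
  have hδt : δ * t < 1 := by
    have h1 : ((r⁻¹ : ℝ) : ℝ*) * (r : ℝ*) = 1 := by
      push_cast; rw [inv_mul_cancel₀ (by exact_mod_cast hr0.ne')]
    nlinarith [hδ, ht, hr, hδr]
  nlinarith [key, hs, ht, hδt]
end

section
/- The plane L×L is not hyperbolic (no limiting parallel ray exists): let ε be a positive infinitesimal hyperreal and A = (0, ε). There is no hyperreal δ > 0 such that the ray from A with slope δ misses the line y = 0 in L×L (i.e., ε/δ is infinite) while every ray from A lying strictly inside the angle it forms with the downward ray AO meets y = 0 at a limited point; formally, for every δ > 0 with ε/δ infinite there exists μ > δ with ε/μ infinite. -/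
-- In the language of Archimedean classes, `x` is infinite iff `mk x < 0`, and `mk` is
-- additive on products with `mk 2 = 0`; so `μ = 2 δ` works.

theorem ArchimedeanClass.mk_ofNat_mul {R : Type*} [CommRing R] [LinearOrder R]
    [IsStrictOrderedRing R] (n : ℕ) [n.AtLeastTwo] (x : R) :
    mk (ofNat(n) * x) = mk x := by
  rw [mk_mul, mk_ofNat, zero_add]

theorem no_limiting_parallel_ray_general (ε : ℝ*) :
    ∀ δ : ℝ*, 0 < δ → (ε / δ).Infinite →
      ∃ μ : ℝ*, δ < μ ∧ (ε / μ).Infinite := by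
  intro δ hδ hεδ
  refine ⟨2 * δ, lt_two_mul_self hδ, ?_⟩
  rw [Hyperreal.infinite_iff] at hεδ ⊢
  rwa [ArchimedeanClass.mk_div, ArchimedeanClass.mk_ofNat_mul, ← ArchimedeanClass.mk_div]

/-- The plane `L × L` is not hyperbolic: there is no limiting parallel ray
from `A = (0, ε)` to the line `y = 0`. For every slope `δ > 0` whose ray
misses `y = 0` in `L × L` (i.e. `ε/δ` is infinite) there is a steeper slope
`μ > δ` whose ray still misses `y = 0` in `L × L`. -/
theorem no_limiting_parallel_ray (ε : ℝ*) (hε : 0 < ε)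
    (hinf : ε.Infinitesimal) :
    ∀ δ : ℝ*, 0 < δ → (ε / δ).Infinite →
      ∃ μ : ℝ*, δ < μ ∧ (ε / μ).Infinite :=
  no_limiting_parallel_ray_general ε
end
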